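/- Let G be a graph, let S be an independent set of vertices of G, and suppose some vertex v ∈ S is adjacent to every vertex of G outside S. If Kc(G − S, χ(G)) = 1, then Kc(G, χ(G) + 1) = 1, where G − S denotes the graph obtained from G by deleting the vertices of S and χ(G) denotes the chromatic number of G. -/

import Mathlib

open SimpleGraph

/-- The spanning subgraph of `G` consisting of the edges both of whose endpoints
receive color `i` or color `j` under `φ`. -/
def kempeSubgraph {V : Type*} (G : SimpleGraph V) {k : ℕ} (φ : V → Fin k) (i j : Fin k) :
    SimpleGraph V where
  Adj u v := G.Adj u v ∧ (φ u = i ∨ φ u = j) ∧ (φ v = i ∨ φ v = j)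
  symm := ⟨fun u v ⟨h, hu, hv⟩ => ⟨h.symm, hv, hu⟩⟩
  loopless := ⟨fun v h => G.irrefl h.1⟩

/-- `ψ` is obtained from `φ` by a single `i,j`-Kempe swap:  the colors `i` and `j` are
interchanged on the connected component (of the subgraph induced by colors `i,j`)
containing `w`, and nothing else changes. -/
def IsKempeSwap {V : Type*} (G : SimpleGraph V) {k : ℕ}
    (φ ψ : G.Coloring (Fin k)) : Prop :=
  ∃ (i j : Fin k) (w : V), ∀ v : V,
    ((kempeSubgraph G (fun x => φ x) i j).Reachable w v → ψ v = Equiv.swap i j (φ v)) ∧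
    (¬ (kempeSubgraph G (fun x => φ x) i j).Reachable w v → ψ v = φ v)

/-- Kempe `k`-equivalence of proper `k`-colorings:  one can be transformed into the
other by a sequence of Kempe swaps. -/
def KempeEquiv {V : Type*} (G : SimpleGraph V) (k : ℕ)
    (φ ψ : G.Coloring (Fin k)) : Prop :=
  Relation.EqvGen (IsKempeSwap G) φ ψ

/-- `Kc G k` is the number of Kempe equivalence classes of proper `k`-colorings of `G`. -/
noncomputable def Kc {V : Type*} (G : SimpleGraph V) (k : ℕ) : ℕ :=
  Nat.card (Quot (KempeEquiv G k))

/-- `G` can be obtained from a bipartite graph by adding `ℓ` edges. -/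
def BipartitePlus {V : Type*} (G : SimpleGraph V) (ℓ : ℕ) : Prop :=
  ∃ E : Finset (Sym2 V), E.card = ℓ ∧ ↑E ⊆ G.edgeSet ∧
    (G.deleteEdges ↑E).Colorable 2


/-!
Every `(n + 1)`-coloring of `G` is Kempe equivalent to one whose class of the new color
`Fin.last n` is exactly `S`: a global swap (a Kempe swap on each component in turn) gives `v`
that color, and afterwards each vertex of `S` can be recolored on its own, because its neighbors
lie outside `S` and are therefore adjacent to `v`. Such colorings are exactly the extensions of
`n`-colorings of `G - S`, and a Kempe swap of `G - S` extends to a Kempe swap of `G`, since the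
vertices of `S` are isolated in every Kempe subgraph avoiding the new color.
-/

section

variable {V : Type*} {G : SimpleGraph V} {k : ℕ}

theorem Equiv.swap_apply_eq_or_eq_iff {α : Type*} [DecidableEq α] {i j a : α} :
    Equiv.swap i j a = i ∨ Equiv.swap i j a = j ↔ a = i ∨ a = j := by
  by_cases hi : a = i
  · simp [hi]
  by_cases hj : a = j
  · simp [hj]
  rw [Equiv.swap_apply_of_ne_of_ne hi hj]

theorem Equiv.swap_apply_ne_of_ne {α : Type*} [DecidableEq α] {i j a b : α} (hab : a ≠ b)
    (h : ¬((a = i ∨ a = j) ∧ (b = i ∨ b = j))) : Equiv.swap i j a ≠ b := by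
  by_cases ha : a = i ∨ a = j
  · rintro rfl
    exact h ⟨ha, Equiv.swap_apply_eq_or_eq_iff.mpr ha⟩
  · rw [not_or] at ha
    rwa [Equiv.swap_apply_of_ne_of_ne ha.1 ha.2]

theorem SimpleGraph.Reachable.eq_of_forall_not_adj {H : SimpleGraph V} {u x : V}
    (hu : ∀ y, ¬H.Adj u y) (h : H.Reachable u x) : x = u := by
  obtain ⟨_ | ⟨hadj, _⟩⟩ := h
  · rfl
  · exact absurd hadj (hu _)

theorem KempeEquiv.refl (φ : G.Coloring (Fin k)) : KempeEquiv G k φ φ :=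
  Relation.EqvGen.refl φ

theorem KempeEquiv.symm {φ ψ : G.Coloring (Fin k)} (h : KempeEquiv G k φ ψ) :
    KempeEquiv G k ψ φ :=
  Relation.EqvGen.symm φ ψ h

theorem KempeEquiv.trans {φ ψ χ : G.Coloring (Fin k)} (h₁ : KempeEquiv G k φ ψ)
    (h₂ : KempeEquiv G k ψ χ) : KempeEquiv G k φ χ :=
  Relation.EqvGen.trans φ ψ χ h₁ h₂

theorem IsKempeSwap.kempeEquiv {φ ψ : G.Coloring (Fin k)} (h : IsKempeSwap G φ ψ) :
    KempeEquiv G k φ ψ :=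
  Relation.EqvGen.rel φ ψ h

theorem Kc_eq_one_iff :
    Kc G k = 1 ↔
      Nonempty (G.Coloring (Fin k)) ∧ ∀ φ ψ : G.Coloring (Fin k), KempeEquiv G k φ ψ := by
  rw [Kc, Nat.card_eq_one_iff_unique, and_comm]
  refine and_congr ⟨fun ⟨q⟩ => ⟨q.out⟩, fun ⟨φ⟩ => ⟨Quot.mk _ φ⟩⟩ ?_
  refine ⟨fun hsub φ ψ => ?_, fun h => ⟨fun p q => ?_⟩⟩
  · exact (Relation.EqvGen.is_equivalence _).eqvGen_iff.1 (Quot.eq.1 (hsub.elim _ _))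
  · induction p using Quot.ind
    induction q using Quot.ind
    exact Quot.sound (h _ _)

theorem kempeSubgraph_congr {φ ψ : V → Fin k} {i j : Fin k}
    (h : ∀ x, (φ x = i ∨ φ x = j) ↔ (ψ x = i ∨ ψ x = j)) :
    kempeSubgraph G φ i j = kempeSubgraph G ψ i j := by
  ext a b
  exact and_congr_right fun _ => and_congr (h a) (h b)

/-- The vertex `u` is an isolated Kempe component for its old and its new color. -/
theorem isKempeSwap_of_forall_ne_eq {φ ψ : G.Coloring (Fin k)} (u : V)
    (h : ∀ x, x ≠ u → ψ x = φ x) : IsKempeSwap G φ ψ := by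
  have hu : ∀ y, ¬(kempeSubgraph G (fun x => φ x) (φ u) (ψ u)).Adj u y := by
    rintro y ⟨hadj, -, hy | hy⟩
    · exact φ.valid hadj hy.symm
    · exact ψ.valid hadj ((h y hadj.ne.symm).trans hy).symm
  refine ⟨φ u, ψ u, u, fun x => ⟨fun hx => ?_, fun hx => h x ?_⟩⟩
  · rw [hx.eq_of_forall_not_adj hu, Equiv.swap_apply_left]
  · rintro rfl
    exact hx (Reachable.refl x)

theorem kempeEquiv_of_eqOn_compl {T : Set V} (hT : T.Finite) (hind : G.IsIndepSet T)
    {φ ψ : G.Coloring (Fin k)} (h : ∀ x, x ∉ T → φ x = ψ x) : KempeEquiv G k φ ψ := by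
  induction T, hT using Set.Finite.induction_on generalizing φ with
  | empty =>
    obtain rfl : φ = ψ := DFunLike.ext _ _ fun x => h x (Set.notMem_empty x)
    exact .refl φ
  | @insert u T hu _ ih =>
    classical
    have hnb : ∀ y, G.Adj u y → φ y ≠ ψ u := fun y hy => by
      rw [h y fun hyT => hind (Set.mem_insert u T) hyT hy.ne hy]
      exact (ψ.valid hy).symm
    have hvalid : ∀ {a b}, G.Adj a b →
        Function.update (⇑φ) u (ψ u) a ≠ Function.update (⇑φ) u (ψ u) b := by
      intro a b hab
      rcases eq_or_ne a u with rfl | ha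
      · rw [Function.update_self, Function.update_of_ne hab.ne.symm]
        exact (hnb b hab).symm
      rcases eq_or_ne b u with rfl | hb
      · rw [Function.update_self, Function.update_of_ne ha]
        exact hnb a hab.symm
      rw [Function.update_of_ne ha, Function.update_of_ne hb]
      exact φ.valid hab
    obtain ⟨φ', hφ'⟩ : ∃ φ' : G.Coloring (Fin k), ⇑φ' = Function.update φ u (ψ u) :=
      ⟨Coloring.mk _ hvalid, rfl⟩
    refine (isKempeSwap_of_forall_ne_eq u fun x hx => ?_).kempeEquiv.trans
      (ih (hind.mono (Set.subset_insert u T)) (φ := φ') fun x hx => ?_)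
    · rw [hφ', Function.update_of_ne hx]
    · rcases eq_or_ne x u with rfl | hxu
      · rw [hφ', Function.update_self]
      · rw [hφ', Function.update_of_ne hxu]
        exact h x (by simp [hxu, hx])

section KempeSwapOn

variable (φ : G.Coloring (Fin k)) (i j : Fin k)

open Classical in
noncomputable def kempeSwapOn (T : Set V) : G.Coloring (Fin k) :=
  Coloring.mk
    (fun x => if ∃ t ∈ T, (kempeSubgraph G φ i j).Reachable t x then Equiv.swap i j (φ x)
      else φ x)
    (by
      intro a b hab
      have hne := φ.valid hab
      have hK : (φ a = i ∨ φ a = j) ∧ (φ b = i ∨ φ b = j) →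
          (kempeSubgraph G φ i j).Reachable a b := fun h => Adj.reachable ⟨hab, h⟩
      split_ifs with ha hb hb
      · exact fun h => hne ((Equiv.swap i j).injective h)
      · exact Equiv.swap_apply_ne_of_ne hne fun h' =>
          hb (ha.imp fun _ ⟨ht, hr⟩ => ⟨ht, hr.trans (hK h')⟩)
      · exact (Equiv.swap_apply_ne_of_ne hne.symm fun h' =>
          ha (hb.imp fun _ ⟨ht, hr⟩ => ⟨ht, hr.trans (hK ⟨h'.2, h'.1⟩).symm⟩)).symm
      · exact hne)

variable {φ i j} {T T' : Set V} {x : V}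

theorem kempeSwapOn_of_reachable (h : ∃ t ∈ T, (kempeSubgraph G φ i j).Reachable t x) :
    kempeSwapOn φ i j T x = Equiv.swap i j (φ x) :=
  if_pos h

theorem kempeSwapOn_of_not_reachable (h : ¬∃ t ∈ T, (kempeSubgraph G φ i j).Reachable t x) :
    kempeSwapOn φ i j T x = φ x :=
  if_neg h

theorem kempeSwapOn_empty : kempeSwapOn φ i j ∅ = φ := by
  refine DFunLike.ext _ _ fun x => kempeSwapOn_of_not_reachable ?_
  simp

theorem kempeSwapOn_congr
    (h : ∀ x, (∃ t ∈ T, (kempeSubgraph G φ i j).Reachable t x) ↔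
      ∃ t ∈ T', (kempeSubgraph G φ i j).Reachable t x) :
    kempeSwapOn φ i j T = kempeSwapOn φ i j T' := by
  refine DFunLike.ext _ _ fun x => ?_
  by_cases hx : ∃ t ∈ T', (kempeSubgraph G φ i j).Reachable t x
  · rw [kempeSwapOn_of_reachable ((h x).2 hx), kempeSwapOn_of_reachable hx]
  · rw [kempeSwapOn_of_not_reachable (mt (h x).1 hx), kempeSwapOn_of_not_reachable hx]

theorem kempeSubgraph_kempeSwapOn :
    kempeSubgraph G (kempeSwapOn φ i j T) i j = kempeSubgraph G φ i j := by
  refine kempeSubgraph_congr fun x => ?_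
  by_cases hx : ∃ t ∈ T, (kempeSubgraph G φ i j).Reachable t x
  · rw [kempeSwapOn_of_reachable hx, Equiv.swap_apply_eq_or_eq_iff]
  · rw [kempeSwapOn_of_not_reachable hx]

theorem isKempeSwap_kempeSwapOn_insert {w : V}
    (hw : ¬∃ t ∈ T, (kempeSubgraph G φ i j).Reachable t w) :
    IsKempeSwap G (kempeSwapOn φ i j T) (kempeSwapOn φ i j (insert w T)) := by
  refine ⟨i, j, w, fun x => ?_⟩
  rw [show (fun y => kempeSwapOn φ i j T y) = ⇑(kempeSwapOn φ i j T) from rfl,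
    kempeSubgraph_kempeSwapOn]
  constructor
  · intro hx
    have hTx : ¬∃ t ∈ T, (kempeSubgraph G φ i j).Reachable t x :=
      fun ⟨t, ht, htx⟩ => hw ⟨t, ht, htx.trans hx.symm⟩
    rw [kempeSwapOn_of_reachable ⟨w, Set.mem_insert w T, hx⟩, kempeSwapOn_of_not_reachable hTx]
  · intro hx
    by_cases hTx : ∃ t ∈ T, (kempeSubgraph G φ i j).Reachable t x
    · rw [kempeSwapOn_of_reachable hTx,
        kempeSwapOn_of_reachable (Set.exists_mem_insert.2 (Or.inr hTx))]
    · rw [kempeSwapOn_of_not_reachable hTx, kempeSwapOn_of_not_reachable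
        (Set.exists_mem_insert.not.2 (not_or.2 ⟨hx, hTx⟩))]

theorem kempeEquiv_kempeSwapOn (hT : T.Finite) :
    KempeEquiv G k φ (kempeSwapOn φ i j T) := by
  induction T, hT using Set.Finite.induction_on with
  | empty =>
    rw [kempeSwapOn_empty]
    exact .refl φ
  | @insert w T _ _ ih =>
    by_cases hw : ∃ t ∈ T, (kempeSubgraph G φ i j).Reachable t w
    · rwa [kempeSwapOn_congr fun x => ?_]
      rw [Set.exists_mem_insert, or_iff_right_iff_imp]
      exact fun hwx => hw.imp fun _ ⟨ht, htw⟩ => ⟨ht, htw.trans hwx⟩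
    · exact ih.trans (isKempeSwap_kempeSwapOn_insert hw).kempeEquiv

end KempeSwapOn

theorem exists_kempeEquiv_swap [Finite V] (φ : G.Coloring (Fin k)) (i j : Fin k) :
    ∃ ψ : G.Coloring (Fin k), KempeEquiv G k φ ψ ∧ ∀ x, ψ x = Equiv.swap i j (φ x) :=
  ⟨kempeSwapOn φ i j Set.univ, kempeEquiv_kempeSwapOn Set.finite_univ,
    fun x => kempeSwapOn_of_reachable ⟨x, Set.mem_univ x, .refl x⟩⟩

theorem exists_kempeEquiv_colorClass_eq [Finite V] {S : Set V} (hS : G.IsIndepSet S) {v : V}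
    (hdom : ∀ w, w ∉ S → G.Adj v w) (φ : G.Coloring (Fin k)) (c : Fin k) :
    ∃ ψ : G.Coloring (Fin k), KempeEquiv G k φ ψ ∧ ψ.colorClass c = S := by
  classical
  obtain ⟨φ₁, hφ₁, hφ₁c⟩ := exists_kempeEquiv_swap φ (φ v) c
  have hne : ∀ x, x ∉ S → φ₁ x ≠ c := fun x hx => by
    rw [← Equiv.swap_apply_left (φ v) c, ← hφ₁c]
    exact (φ₁.valid (hdom x hx)).symm
  have hvalid : ∀ {a b}, G.Adj a b →
      S.piecewise (fun _ => c) φ₁ a ≠ S.piecewise (fun _ => c) φ₁ b := by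
    intro a b hab
    by_cases ha : a ∈ S <;> by_cases hb : b ∈ S
    · exact absurd hab (hS ha hb hab.ne)
    · rw [Set.piecewise_eq_of_mem _ _ _ ha, Set.piecewise_eq_of_notMem _ _ _ hb]
      exact (hne b hb).symm
    · rw [Set.piecewise_eq_of_notMem _ _ _ ha, Set.piecewise_eq_of_mem _ _ _ hb]
      exact hne a ha
    · rw [Set.piecewise_eq_of_notMem _ _ _ ha, Set.piecewise_eq_of_notMem _ _ _ hb]
      exact φ₁.valid hab
  obtain ⟨ψ, hψ⟩ : ∃ ψ : G.Coloring (Fin k), ⇑ψ = S.piecewise (fun _ => c) φ₁ :=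
    ⟨Coloring.mk _ hvalid, rfl⟩
  refine ⟨ψ, hφ₁.trans (kempeEquiv_of_eqOn_compl S.toFinite hS fun x hx => ?_),
    Set.ext fun x => ?_⟩
  · rw [hψ, Set.piecewise_eq_of_notMem _ _ _ hx]
  · change ψ x = c ↔ x ∈ S
    by_cases hx : x ∈ S
    · simp only [hψ, Set.piecewise_eq_of_mem _ _ _ hx, hx]
    · simp only [hψ, Set.piecewise_eq_of_notMem _ _ _ hx, hx, hne x hx]

section ExtendColoring

variable {S : Set V} (hS : G.IsIndepSet S) {n : ℕ}

open Classical in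
noncomputable def extendColoring (θ : (G.induce Sᶜ).Coloring (Fin n)) :
    G.Coloring (Fin (n + 1)) :=
  Coloring.mk (fun x => if hx : x ∈ S then Fin.last n else (θ ⟨x, hx⟩).castSucc) (by
    intro a b hab
    by_cases ha : a ∈ S <;> by_cases hb : b ∈ S
    · exact absurd hab (hS ha hb hab.ne)
    · rw [dif_pos ha, dif_neg hb]
      exact (Fin.castSucc_lt_last _).ne'
    · rw [dif_neg ha, dif_pos hb]
      exact (Fin.castSucc_lt_last _).ne
    · rw [dif_neg ha, dif_neg hb, Ne, Fin.castSucc_inj]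
      exact θ.valid (show (G.induce Sᶜ).Adj ⟨a, ha⟩ ⟨b, hb⟩ from hab))

variable {hS} {θ θ' : (G.induce Sᶜ).Coloring (Fin n)}

theorem extendColoring_of_mem {x : V} (hx : x ∈ S) : extendColoring hS θ x = Fin.last n :=
  dif_pos hx

theorem extendColoring_coe (x : ↥Sᶜ) : extendColoring hS θ x = (θ x).castSucc :=
  dif_neg x.2

theorem notMem_of_kempeSubgraph_extendColoring_adj {i j : Fin n} {a b : V}
    (h : (kempeSubgraph G (extendColoring hS θ) i.castSucc j.castSucc).Adj a b) : b ∉ S := by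
  intro hb
  have hcolor := h.2.2
  rw [extendColoring_of_mem hb] at hcolor
  rcases hcolor with h' | h' <;> exact (Fin.castSucc_lt_last _).ne' h'

theorem kempeSubgraph_extendColoring_adj_iff {i j : Fin n} {a b : ↥Sᶜ} :
    (kempeSubgraph G (extendColoring hS θ) i.castSucc j.castSucc).Adj a b ↔
      (kempeSubgraph (G.induce Sᶜ) θ i j).Adj a b := by
  simp only [kempeSubgraph, extendColoring_coe, Fin.castSucc_inj, comap_adj,
    Function.Embedding.subtype_apply]

theorem kempeSubgraph_extendColoring_reachable_iff {i j : Fin n} {a b : ↥Sᶜ} :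
    (kempeSubgraph G (extendColoring hS θ) i.castSucc j.castSucc).Reachable a b ↔
      (kempeSubgraph (G.induce Sᶜ) θ i j).Reachable a b := by
  constructor
  · rintro ⟨p⟩
    suffices ∀ {x y : V}
        (p : (kempeSubgraph G (extendColoring hS θ) i.castSucc j.castSucc).Walk x y)
        (hx : x ∉ S),
        ∃ hy : y ∉ S, (kempeSubgraph (G.induce Sᶜ) θ i j).Reachable ⟨x, hx⟩ ⟨y, hy⟩ from
      (this p a.2).2
    intro x y p
    induction p with
    | nil => exact fun hx => ⟨hx, .refl _⟩
    | cons h _ ih =>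
      intro hx
      obtain ⟨hy, hr⟩ := ih (notMem_of_kempeSubgraph_extendColoring_adj h)
      exact ⟨hy, (kempeSubgraph_extendColoring_adj_iff.1 h).reachable.trans hr⟩
  · exact Reachable.map ⟨Subtype.val, kempeSubgraph_extendColoring_adj_iff.2⟩

theorem isKempeSwap_extendColoring (h : IsKempeSwap (G.induce Sᶜ) θ θ') :
    IsKempeSwap G (extendColoring hS θ) (extendColoring hS θ') := by
  classical
  obtain ⟨i, j, w, hw⟩ := h
  refine ⟨i.castSucc, j.castSucc, w, fun x => ?_⟩
  rw [show (fun y => extendColoring hS θ y) = ⇑(extendColoring hS θ) from rfl]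
  by_cases hx : x ∈ S
  · have hwx : ¬(kempeSubgraph G (extendColoring hS θ) i.castSucc j.castSucc).Reachable w x :=
      fun hr => w.2 (hr.symm.eq_of_forall_not_adj (fun y hxy =>
        notMem_of_kempeSubgraph_extendColoring_adj hxy.symm hx) ▸ hx)
    refine ⟨fun hr => absurd hr hwx, fun _ => ?_⟩
    rw [extendColoring_of_mem hx, extendColoring_of_mem hx]
  · lift x to ↥Sᶜ using hx
    rw [kempeSubgraph_extendColoring_reachable_iff, extendColoring_coe, extendColoring_coe,
      (Fin.castSucc_injective n).swap_apply]
    exact (hw x).imp (fun h hr => congrArg _ (h hr)) (fun h hr => congrArg _ (h hr))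

theorem kempeEquiv_extendColoring (h : KempeEquiv (G.induce Sᶜ) n θ θ') :
    KempeEquiv G (n + 1) (extendColoring hS θ) (extendColoring hS θ') := by
  induction h with
  | rel _ _ h => exact (isKempeSwap_extendColoring h).kempeEquiv
  | refl => exact .refl _
  | symm _ _ _ ih => exact ih.symm
  | trans _ _ _ _ _ ih₁ ih₂ => exact ih₁.trans ih₂

variable (hS) in
theorem exists_extendColoring_eq_of_colorClass_eq (φ : G.Coloring (Fin (n + 1)))
    (hφ : φ.colorClass (Fin.last n) = S) :
    ∃ θ : (G.induce Sᶜ).Coloring (Fin n), extendColoring hS θ = φ := by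
  rw [Set.ext_iff] at hφ
  refine ⟨Coloring.mk (fun x => (φ x).castPred fun hx => x.2 ((hφ x).1 hx))
    fun {a b} hab h => φ.valid hab (Fin.castPred_inj.1 h), DFunLike.ext _ _ fun x => ?_⟩
  by_cases hx : x ∈ S
  · rw [extendColoring_of_mem hx]
    exact ((hφ x).2 hx).symm
  · lift x to ↥Sᶜ using hx
    rw [extendColoring_coe]
    exact Fin.castSucc_castPred _ fun hx => x.2 ((hφ x).1 hx)

end ExtendColoring

end

theorem stmt17_general {V : Type*} [Fintype V] (G : SimpleGraph V) (S : Set V)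
    (hS : ∀ a ∈ S, ∀ b ∈ S, ¬ G.Adj a b)
    (v : V) (hdom : ∀ w : V, w ∉ S → G.Adj v w)
    (n : ℕ)
    (h : Kc (G.induce Sᶜ) n = 1) :
    Kc G (n + 1) = 1 := by
  have hSind : G.IsIndepSet S := fun a ha b hb _ => hS a ha b hb
  rw [Kc_eq_one_iff] at h ⊢
  obtain ⟨⟨θ₀⟩, hθ⟩ := h
  have normalize (φ : G.Coloring (Fin (n + 1))) :
      ∃ θ, KempeEquiv G (n + 1) φ (extendColoring hSind θ) := by
    obtain ⟨ψ, hφψ, hψ⟩ := exists_kempeEquiv_colorClass_eq hSind hdom φ (Fin.last n)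
    obtain ⟨θ, rfl⟩ := exists_extendColoring_eq_of_colorClass_eq hSind ψ hψ
    exact ⟨θ, hφψ⟩
  refine ⟨⟨extendColoring hSind θ₀⟩, fun φ ψ => ?_⟩
  obtain ⟨θ, hφ⟩ := normalize φ
  obtain ⟨θ', hψ⟩ := normalize ψ
  exact hφ.trans ((kempeEquiv_extendColoring (hθ θ θ')).trans hψ.symm)

/-- If `S` is an independent set of `G` containing a vertex `v` adjacent to every
vertex outside `S`, and `Kc(G - S, χ(G)) = 1`, then `Kc(G, χ(G)+1) = 1`. -/
theorem stmt17 {V : Type*} [Fintype V] (G : SimpleGraph V) (S : Set V)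
    (hS : ∀ a ∈ S, ∀ b ∈ S, ¬ G.Adj a b)
    (v : V) (hv : v ∈ S) (hdom : ∀ w : V, w ∉ S → G.Adj v w)
    (n : ℕ) (hchi : G.chromaticNumber = n)
    (h : Kc (G.induce Sᶜ) n = 1) :
    Kc G (n + 1) = 1 :=
  stmt17_general G S hS v hdom n h
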